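/- Let A be a unital C*-algebra and x, e ∈ A with 0 ≤ e ≤ 1 and x*x ≤ e. Let B ∋ 1 be a unital C*-subalgebra of A with e ∈ B' (e commutes with B), and suppose x* a x = a e for all a ∈ B. Then for every a ∈ B, (ax - xa)*(ax - xa) = a*(x*x - e)a ≤ 0, hence ax = xa; consequently a(x*x - e) = x*ax - ae = 0 for all a ∈ B. -/
import Mathlib


/-- Let `x, e` be elements of a unital C*-algebra `A` with `0 ≤ e ≤ 1`,
`x*x ≤ e`, `e` commuting with a C*-subalgebra `B`, and `x* a x = a e` for all `a ∈ B`.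
Then for every `a ∈ B`: `(ax - xa)*(ax - xa) = a*(x*x - e)a ≤ 0`, hence `ax = xa`, and
consequently `a(x*x - e) = 0 = (x*x - e)a`. -/
theorem stmt16 {A : Type*} [CStarAlgebra A] [PartialOrder A] [StarOrderedRing A]
    (B : StarSubalgebra ℂ A) (x e : A)
    (he0 : 0 ≤ e) (he1 : e ≤ 1) (hxx : star x * x ≤ e)
    (hecomm : ∀ a ∈ B, e * a = a * e)
    (hx : ∀ a ∈ B, star x * a * x = a * e) :
    ∀ a ∈ B,
      star (a * x - x * a) * (a * x - x * a) = star a * (star x * x - e) * a ∧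
      star a * (star x * x - e) * a ≤ 0 ∧
      a * x = x * a ∧
      a * (star x * x - e) = 0 ∧ (star x * x - e) * a = 0 := by
  -- key expansion and commutation, as a helper
  have key : ∀ a ∈ B,
      star (a * x - x * a) * (a * x - x * a) = star a * (star x * x - e) * a ∧
      star a * (star x * x - e) * a ≤ 0 ∧ a * x = x * a := by
    intro a ha
    have hsa : star a ∈ B := star_mem ha
    have hsaa : star a * a ∈ B := mul_mem hsa ha
    have h1 : star x * (star a * a) * x = star a * a * e := hx _ hsaa
    have h2 : star x * star a * x = star a * e := by
      have := hx _ hsa; rwa [mul_assoc] at this ⊢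
    have h3 : star x * a * x = a * e := hx _ ha
    have hea : e * a = a * e := hecomm a ha
    have expand : star (a * x - x * a) * (a * x - x * a)
        = star a * (star x * x - e) * a := by
      have : star (a * x - x * a) * (a * x - x * a)
          = star x * (star a * a) * x - (star x * star a * x) * a
            - star a * (star x * a * x) + star a * (star x * x) * a := by
        simp only [star_sub, star_mul]
        noncomm_ring
      rw [this, h1, h2, h3, mul_sub (star a), sub_mul,
        mul_assoc (star a) e a, hea]
      noncomm_ring
    have hle : star a * (star x * x - e) * a ≤ 0 := by
      have := star_left_conjugate_le_conjugate hxx a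
      have h0 : star a * (star x * x - e) * a
          = star a * (star x * x) * a - star a * e * a := by noncomm_ring
      rw [h0, sub_nonpos]
      exact this
    have hy : a * x - x * a = 0 := by
      rw [← CStarRing.star_mul_self_eq_zero_iff]
      exact le_antisymm (expand ▸ hle) (star_mul_self_nonneg _)
    exact ⟨expand, hle, sub_eq_zero.mp hy⟩
  intro a ha
  obtain ⟨h1, h2, h3⟩ := key a ha
  have h3' : star a * x = x * star a := (key _ (star_mem ha)).2.2
  have hxs : a * star x = star x * a := by
    have := congrArg star h3'
    simpa [star_mul] using this.symm
  refine ⟨h1, h2, h3, ?_, ?_⟩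
  · have : a * (star x * x) = star x * a * x := by
      rw [← mul_assoc, ← hxs, mul_assoc]
    rw [mul_sub, this, hx a ha, sub_self]
  · have : (star x * x) * a = star x * a * x := by
      rw [mul_assoc, ← h3, ← mul_assoc]
    rw [sub_mul, this, hx a ha, hecomm a ha, sub_self]
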